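/- Let W be a nonzero element of H containing the letter L. Then every word U equivalent to W has exactly one of the following forms: (i) U = L·A with A a word in a1, a2, a3; (ii) U = M·A1·P·A2·g·A3 with A1, A2, A3 words in a1, a2, a3; (iii) U contains neither L nor g, contains exactly one occurrence each of M (as the first letter), P, R, Q, and exactly one letter from {t1, t2, t3, s1, s2}, and the letters P, R, Q appear in that left-to-right order. -/

import Mathlib

inductive Phi
  | L | M | P | Q | R | g | s1 | s2 | t1 | t2 | t3 | a1 | a2 | a3
deriving DecidableEq

open Phi

abbrev W0 := WithZero (FreeMonoid Phi)

def w (l : List Phi) : W0 := ((FreeMonoid.ofList l : FreeMonoid Phi) : W0)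

def ai : Fin 3 → Phi
  | 0 => a1 | 1 => a2 | 2 => a3

def ti : Fin 3 → Phi
  | 0 => t1 | 1 => t2 | 2 => t3

def si : Fin 2 → Phi
  | 0 => s1 | 1 => s2

/-- `x` is one of the letters `a1, a2, a3`. -/
def isA (x : Phi) : Prop := x = a1 ∨ x = a2 ∨ x = a3

/-- The defining relations (1)–(14) of the semigroup `H`. -/
inductive rel : W0 → W0 → Prop
  | r1L (x : Phi) : rel (w [x, L]) 0
  | r1M (x : Phi) : rel (w [x, M]) 0
  | r2 : rel (w [L]) (w [M, P, g])
  | r3 (i : Fin 3) : rel (w [g, ai i]) (w [ai i, g])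
  | r4 (x : Phi) (h : ¬ isA x) : rel (w [g, x]) 0
  | r5 (i j : Fin 3) : rel (w [ai i, g, ai j]) (w [ai i, R, s1, Q, ai j])
  | r6 (i : Fin 3) (x : Phi) (h : x = R ∨ isA x) : rel (w [ti i, x]) (w [x, ti i])
  | r7 (i : Fin 3) : rel (w [P, ai i, ti i]) (w [ai i, P, s1])
  | r8 (i j : Fin 3) (h : i ≠ j) : rel (w [P, ai j, ti i]) (w [ai j, P, s2])
  | r9 (i : Fin 3) (j : Fin 2) : rel (w [si j, ai i]) (w [ai i, si j])
  | r10 : rel (w [s1, R]) (w [R, s1])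
  | r11 (i : Fin 3) : rel (w [s1, Q, ai i]) (w [ti i, ai i, Q])
  | r12 : rel (w [P, R, s1]) 0
  | r13 (i : Fin 3) : rel (w [s2, R, ai i]) (w [ai i, s2, R])
  | r14 (i : Fin 3) : rel (w [s2, R, Q, ai i]) (w [R, ti i, ai i, Q])

/-- The congruence on the free monoid with zero generated by the relations. -/
def hCon : Con W0 := conGen rel

/-- The semigroup (with zero) `H` of the paper. -/
abbrev H := hCon.Quotient

/-- The quotient map. -/
def q : W0 →* H := hCon.mk'

/-- `l` is a word in the letters `a1, a2, a3`. -/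
def Aword (l : List Phi) : Prop := ∀ x ∈ l, isA x

/-- `l` is square-free: it contains no factor `Y ++ Y` with `Y` nonempty. -/
def SqFree (l : List Phi) : Prop := ∀ Y : List Phi, Y ≠ [] → ¬ (Y ++ Y) <:+: l

/-- `x` is one of `t1, t2, t3, s1, s2`. -/
def isTS : Phi → Bool
  | t1 | t2 | t3 | s1 | s2 => true
  | _ => false

/-!
Call a word *accepted* if it is `L A`, `M A₁ P A₂ g A₃`, or a word beginning with `M` whose
letters other than `aᵢ, tᵢ, sⱼ` are `M P R Q` in this order and which contains exactly one `tᵢ`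
or `sⱼ` (the `A`'s being words in the `aᵢ`). These words are recognised by a ten-state
automaton, and the set of words that are accepted or equal to `0` in `H` is saturated by the
defining congruence: both sides of a zero relation are `0` in every context, and the two sides of
every other relation induce the same transformation of the states, which `decide` checks.

A nonzero word containing `L` is of the form `L A`: a letter in front of `L` kills it by (1), and
if a letter `x` that is not an `aᵢ` follows `L A`, then `L A x = M P g A x = M P A g x = 0`. So it
is accepted, hence so is every word equivalent to it, and accepted words have the three shapes.
-/

instance : Fintype Phi :=
  ⟨{L, M, P, Q, R, g, s1, s2, t1, t2, t3, a1, a2, a3}, fun x => by cases x <;> decide⟩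

instance : DecidablePred isA := fun x => by unfold isA; infer_instance

def syntacticCon {M : Type*} [Monoid M] (S : M → Prop) : Con M where
  r x y := ∀ u v, S (u * x * v) ↔ S (u * y * v)
  iseqv := ⟨fun _ _ _ => Iff.rfl, fun h u v => (h u v).symm,
    fun h₁ h₂ u v => (h₁ u v).trans (h₂ u v)⟩
  mul' {a b c d} hab hcd u v := by
    have h₁ := hab u (c * v)
    have h₂ := hcd (u * b) v
    simp only [mul_assoc] at h₁ h₂ ⊢
    exact h₁.trans h₂

lemma iff_of_syntacticCon {M : Type*} [Monoid M] {S : M → Prop} {x y : M}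
    (h : syntacticCon S x y) : S x ↔ S y := by
  simpa using h 1 1

lemma syntacticCon_withZero_of_coe {M : Type*} [Monoid M] {S : WithZero M → Prop}
    {x y : WithZero M} (h : ∀ u v : M, S (u * x * v) ↔ S (u * y * v)) :
    syntacticCon S x y := by
  intro u v
  induction u using WithZero.recZeroCoe with
  | zero => simp
  | coe u =>
    induction v using WithZero.recZeroCoe with
    | zero => simp
    | coe v => exact h u v

lemma w_injective : Function.Injective w :=
  fun _ _ h => congrArg FreeMonoid.toList (WithZero.coe_inj.mp h)

lemma hCon_of_rel {x y : W0} (h : rel x y) : hCon x y := ConGen.Rel.of _ _ h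

lemma hCon_mul_mul {x y : W0} (u v : W0) (h : hCon x y) : hCon (u * x * v) (u * y * v) :=
  hCon.mul (hCon.mul (hCon.refl u) h) (hCon.refl v)

lemma hCon_mul_mul_zero {x : W0} (u v : W0) (h : hCon x 0) : hCon (u * x * v) 0 := by
  simpa using hCon_mul_mul u v h

lemma hCon_infix {a b : List Phi} (u v : List Phi) (h : hCon (w a) (w b)) :
    hCon (w (u ++ a ++ v)) (w (u ++ b ++ v)) :=
  hCon_mul_mul (w u) (w v) h

lemma hCon_zero_infix {a : List Phi} (u v : List Phi) (h : hCon (w a) 0) :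
    hCon (w (u ++ a ++ v)) 0 :=
  hCon_mul_mul_zero (w u) (w v) h

lemma exists_ai_eq {x : Phi} (hx : isA x) : ∃ i, ai i = x := by
  rcases hx with rfl | rfl | rfl
  exacts [⟨0, rfl⟩, ⟨1, rfl⟩, ⟨2, rfl⟩]

lemma hCon_g_cons_of_Aword {A : List Phi} (hA : Aword A) : hCon (w (g :: A)) (w (A ++ [g])) := by
  induction A with
  | nil => exact hCon.refl _
  | cons x A ih =>
    obtain ⟨i, rfl⟩ := exists_ai_eq (hA x List.mem_cons_self)
    have hswap : hCon (w (g :: ai i :: A)) (w (ai i :: g :: A)) :=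
      hCon_infix [] A (hCon_of_rel (.r3 i))
    have hslide := hCon_infix [ai i] [] (ih fun y hy => hA y (List.mem_cons_of_mem _ hy))
    simp only [List.append_nil, List.singleton_append] at hslide
    exact hCon.trans hswap hslide

lemma eq_L_cons_of_not_hCon_zero {W : List Phi} (hL : L ∈ W) (hW : ¬ hCon (w W) 0) :
    ∃ A, Aword A ∧ W = L :: A := by
  obtain ⟨p, r, rfl⟩ := List.append_of_mem hL
  rcases List.eq_nil_or_concat p with rfl | ⟨p, x, rfl⟩
  · cases hfind : r.find? (fun x => !decide (isA x)) with
    | none => exact ⟨r, fun x hx => by simpa using List.find?_eq_none.mp hfind x hx, rfl⟩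
    | some x =>
      obtain ⟨hx, A, r, rfl, hA⟩ := List.find?_eq_some_iff_append.mp hfind
      simp only [Bool.not_not, decide_eq_true_eq, Bool.not_eq_true', decide_eq_false_iff_not]
        at hx hA
      have hL : hCon (w (L :: (A ++ x :: r))) (w (M :: P :: g :: (A ++ x :: r))) :=
        hCon_infix [] _ (hCon_of_rel .r2)
      have hg := hCon_infix [M, P] (x :: r) (hCon_g_cons_of_Aword hA)
      have hzero := hCon_zero_infix ([M, P] ++ A) r (hCon_of_rel (.r4 x hx))
      simp only [List.cons_append, List.nil_append, List.append_assoc] at hg hzero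
      exact absurd (hCon.trans hL (hCon.trans hg hzero)) hW
  · have hzero := hCon_zero_infix p r (hCon_of_rel (.r1L x))
    simp only [List.append_assoc, List.cons_append, List.nil_append] at hzero
    simp [hzero] at hW

def isSkel : Phi → Bool
  | L | M | P | Q | R | g => true
  | _ => false

lemma isA_of_not_isSkel {x : Phi} (hs : ¬ isSkel x) (ht : ¬ isTS x) : isA x := by
  cases x <;> simp_all [isSkel, isTS, isA]

lemma aword_of_forall {A : List Phi} (hs : ∀ x ∈ A, ¬ isSkel x) (ht : ∀ x ∈ A, ¬ isTS x) :
    Aword A :=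
  fun x hx => isA_of_not_isSkel (hs x hx) (ht x hx)

def skeleton (U : List Phi) : List Phi := U.filter isSkel

structure HasShape (U sk : List Phi) (n : ℕ) : Prop where
  head : U.head? = sk.head?
  skeleton_eq : skeleton U = sk
  countP_isTS : U.countP isTS = n

namespace HasShape

variable {U sk : List Phi} {n : ℕ}

lemma snoc {x : Phi} (h : HasShape U sk n) (hx : sk = [] → isSkel x) :
    HasShape (U ++ [x]) (sk ++ [x].filter isSkel) (n + [x].countP isTS) := by
  obtain ⟨hhead, hsk, hts⟩ := h
  refine ⟨?_, by simp [skeleton, ← hsk], by simp [← hts]⟩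
  rcases U with _ | ⟨y, U⟩
  · obtain rfl : sk = [] := by simpa using hhead.symm
    simp [hx rfl]
  · cases sk with
    | nil => simp at hhead
    | cons z sk => simpa using hhead

lemma not_mem (h : HasShape U sk n) {x : Phi} (hx : isSkel x) (hxsk : x ∉ sk) : x ∉ U :=
  fun hxU => hxsk (h.skeleton_eq ▸ List.mem_filter.mpr ⟨hxU, hx⟩)

lemma count_eq (h : HasShape U sk n) {x : Phi} (hx : isSkel x) : U.count x = sk.count x := by
  rw [← h.skeleton_eq, skeleton, List.count_filter hx]

lemma eq_cons {x : Phi} (h : HasShape U (x :: sk) n) : ∃ V, U = x :: V ∧ skeleton V = sk := by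
  obtain ⟨A, V, rfl, hA, hx, hV⟩ := List.filter_eq_cons_iff.mp h.skeleton_eq
  cases A with
  | nil => exact ⟨V, rfl, hV⟩
  | cons y A =>
    obtain rfl : y = x := by simpa using h.head
    exact absurd hx (hA y List.mem_cons_self)

lemma eq_L_cons (h : HasShape U [L] 0) : ∃ A, Aword A ∧ U = L :: A := by
  have hts := List.countP_eq_zero.mp h.countP_isTS
  obtain ⟨A, rfl, hA⟩ := h.eq_cons
  exact ⟨A, aword_of_forall (List.filter_eq_nil_iff.mp hA) (fun x hx => hts x (by simp [hx])),
    rfl⟩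

lemma eq_M_P_g (h : HasShape U [M, P, g] 0) :
    ∃ A1 A2 A3 : List Phi, Aword A1 ∧ Aword A2 ∧ Aword A3 ∧
      U = [M] ++ A1 ++ [P] ++ A2 ++ [g] ++ A3 := by
  have hts := List.countP_eq_zero.mp h.countP_isTS
  obtain ⟨V, rfl, hV⟩ := h.eq_cons
  obtain ⟨A1, V, rfl, hA1, -, hV⟩ := List.filter_eq_cons_iff.mp hV
  obtain ⟨A2, A3, rfl, hA2, -, hA3⟩ := List.filter_eq_cons_iff.mp hV
  refine ⟨A1, A2, A3, aword_of_forall hA1 ?_, aword_of_forall hA2 ?_,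
    aword_of_forall (List.filter_eq_nil_iff.mp hA3) ?_, by simp⟩ <;>
    exact fun x hx => hts x (by simp [hx])

lemma M_P_R_Q (h : HasShape U [M, P, R, Q] 1) :
    L ∉ U ∧ g ∉ U ∧
      U.count M = 1 ∧ U.head? = some M ∧
      U.count P = 1 ∧ U.count R = 1 ∧ U.count Q = 1 ∧
      U.countP isTS = 1 ∧
      ∃ B1 B2 B3 B4 : List Phi,
        U = B1 ++ [P] ++ B2 ++ [R] ++ B3 ++ [Q] ++ B4 := by
  refine ⟨h.not_mem rfl (by decide), h.not_mem rfl (by decide), h.count_eq rfl, h.head,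
    h.count_eq rfl, h.count_eq rfl, h.count_eq rfl, h.countP_isTS, ?_⟩
  obtain ⟨B1, V, rfl, -, -, hV⟩ := List.filter_eq_cons_iff.mp h.skeleton_eq
  obtain ⟨B2, V, rfl, -, -, hV⟩ := List.filter_eq_cons_iff.mp hV
  obtain ⟨B3, V, rfl, -, -, hV⟩ := List.filter_eq_cons_iff.mp hV
  obtain ⟨B4, B5, rfl, -, -, -⟩ := List.filter_eq_cons_iff.mp hV
  exact ⟨B1 ++ M :: B2, B3, B4, B5, by simp⟩

end HasShape

/-- The letters indicate the part of `M P R Q` read so far, the index the number of `tᵢ, sⱼ`. -/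
inductive St
  | start | M₀ | M₁ | MP₀ | MP₁ | MPR₀ | MPR₁ | MPRQ₀ | accept | dead
deriving DecidableEq

instance : Fintype St :=
  ⟨{.start, .M₀, .M₁, .MP₀, .MP₁, .MPR₀, .MPR₁, .MPRQ₀, .accept, .dead},
    fun s => by cases s <;> decide⟩

def St.tick : St → St
  | M₀ => M₁
  | MP₀ => MP₁
  | MPR₀ => MPR₁
  | MPRQ₀ => accept
  | _ => dead

def step : St → Phi → St
  | .start, L => .accept
  | .start, M => .M₀
  | .M₀, P => .MP₀
  | .M₁, P => .MP₁
  | .MP₀, g => .accept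
  | .MP₀, R => .MPR₀
  | .MP₁, R => .MPR₁
  | .MPR₀, Q => .MPRQ₀
  | .MPR₁, Q => .accept
  | .start, _ | .dead, _ => .dead
  | s, x => if isA x then s else if isTS x then s.tick else .dead

def run (s : St) (U : List Phi) : St := U.foldl step s

lemma run_append (s : St) (U V : List Phi) : run s (U ++ V) = run (run s U) V :=
  List.foldl_append ..

def Accepts (U : List Phi) : Prop := run .start U = .accept

def St.shapes : St → List (List Phi × ℕ)
  | start => [([], 0)]
  | M₀ => [([M], 0)]
  | M₁ => [([M], 1)]
  | MP₀ => [([M, P], 0)]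
  | MP₁ => [([M, P], 1)]
  | MPR₀ => [([M, P, R], 0)]
  | MPR₁ => [([M, P, R], 1)]
  | MPRQ₀ => [([M, P, R, Q], 0)]
  | accept => [([L], 0), ([M, P, g], 0), ([M, P, R, Q], 1)]
  | dead => []

lemma step_shapes : ∀ (s : St) (x : Phi), step s x ≠ .dead → ∀ p ∈ s.shapes,
    (p.1 = [] → isSkel x) ∧
      (p.1 ++ [x].filter isSkel, p.2 + [x].countP isTS) ∈ (step s x).shapes := by
  decide

lemma exists_hasShape_of_run (U : List Phi) (hU : run .start U ≠ .dead) :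
    ∃ p ∈ (run .start U).shapes, HasShape U p.1 p.2 := by
  induction U using List.reverseRecOn with
  | nil => exact ⟨([], 0), List.mem_singleton_self _, ⟨rfl, rfl, rfl⟩⟩
  | append_singleton U x ih =>
    rw [run_append] at hU ⊢
    have hU' : run .start U ≠ .dead := fun h => hU (by rw [h]; rfl)
    obtain ⟨p, hp, hshape⟩ := ih hU'
    obtain ⟨hx, hp'⟩ := step_shapes _ x hU p hp
    exact ⟨_, hp', hshape.snoc hx⟩

lemma hasShape_of_accepts {U : List Phi} (h : Accepts U) :
    HasShape U [L] 0 ∨ HasShape U [M, P, g] 0 ∨ HasShape U [M, P, R, Q] 1 := by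
  obtain ⟨p, hp, hshape⟩ := exists_hasShape_of_run U (by rw [h]; decide)
  rw [h] at hp
  simp only [St.shapes, List.mem_cons, List.not_mem_nil, or_false] at hp
  rcases hp with rfl | rfl | rfl
  exacts [Or.inl hshape, Or.inr (Or.inl hshape), Or.inr (Or.inr hshape)]

lemma accepts_L_cons {A : List Phi} (hA : Aword A) : Accepts (L :: A) := by
  have hstep : ∀ x, isA x → step .accept x = .accept := by decide
  change run .accept A = .accept
  induction A with
  | nil => rfl
  | cons x A ih =>
    exact (congrArg (run · A) (hstep x (hA x List.mem_cons_self))).trans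
      (ih fun y hy => hA y (List.mem_cons_of_mem _ hy))

def ZeroOrAccepted (x : W0) : Prop := hCon x 0 ∨ ∃ U, x = w U ∧ Accepts U

lemma zeroOrAccepted_w {U : List Phi} : ZeroOrAccepted (w U) ↔ hCon (w U) 0 ∨ Accepts U := by
  simp only [ZeroOrAccepted, w_injective.eq_iff, exists_eq_left']

lemma syntacticCon_of_rel_zero {x : W0} (h : rel x 0) : syntacticCon ZeroOrAccepted x 0 :=
  fun u v => iff_of_true (.inl (hCon_mul_mul_zero u v (hCon_of_rel h)))
    (.inl (by simpa using hCon.refl 0))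

lemma syntacticCon_of_run_eq {a b : List Phi} (hab : rel (w a) (w b))
    (hrun : ∀ s, run s a = run s b) : syntacticCon ZeroOrAccepted (w a) (w b) := by
  refine syntacticCon_withZero_of_coe fun u v => ?_
  set u' := u.toList
  set v' := v.toList
  change ZeroOrAccepted (w (u' ++ a ++ v')) ↔ ZeroOrAccepted (w (u' ++ b ++ v'))
  have hctx : hCon (w (u' ++ a ++ v')) (w (u' ++ b ++ v')) := hCon_mul_mul u v (hCon_of_rel hab)
  have hacc : Accepts (u' ++ a ++ v') ↔ Accepts (u' ++ b ++ v') := by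
    simp only [Accepts, run_append, hrun]
  rw [zeroOrAccepted_w, zeroOrAccepted_w]
  exact or_congr ⟨hCon.trans (hCon.symm hctx), hCon.trans hctx⟩ hacc

lemma hCon_le_syntacticCon : hCon ≤ syntacticCon ZeroOrAccepted := by
  refine Con.conGen_le.mpr fun x y h => ?_
  cases h with
  | r1L x => exact syntacticCon_of_rel_zero (.r1L x)
  | r1M x => exact syntacticCon_of_rel_zero (.r1M x)
  | r4 x hx => exact syntacticCon_of_rel_zero (.r4 x hx)
  | r12 => exact syntacticCon_of_rel_zero .r12
  | r2 => exact syntacticCon_of_run_eq .r2 (by decide)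
  | r3 i => exact syntacticCon_of_run_eq (.r3 i) (by decide +revert)
  | r5 i j => exact syntacticCon_of_run_eq (.r5 i j) (by decide +revert)
  | r6 i x hx => exact syntacticCon_of_run_eq (.r6 i x hx) (by decide +revert)
  | r7 i => exact syntacticCon_of_run_eq (.r7 i) (by decide +revert)
  | r8 i j hij => exact syntacticCon_of_run_eq (.r8 i j hij) (by decide +revert)
  | r9 i j => exact syntacticCon_of_run_eq (.r9 i j) (by decide +revert)
  | r10 => exact syntacticCon_of_run_eq .r10 (by decide)
  | r11 i => exact syntacticCon_of_run_eq (.r11 i) (by decide +revert)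
  | r13 i => exact syntacticCon_of_run_eq (.r13 i) (by decide +revert)
  | r14 i => exact syntacticCon_of_run_eq (.r14 i) (by decide +revert)

lemma accepts_of_hCon {U V : List Phi} (h : hCon (w U) (w V)) (hV : ¬ hCon (w V) 0)
    (hacc : Accepts V) : Accepts U := by
  have hgood := (iff_of_syntacticCon (hCon_le_syntacticCon h)).mpr
    (zeroOrAccepted_w.mpr (.inr hacc))
  rcases zeroOrAccepted_w.mp hgood with hzero | hU
  · exact absurd (hCon.trans (hCon.symm h) hzero) hV
  · exact hU

/-- trichotomy for words equivalent to a nonzero word containing `L`. -/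
theorem stmt11 (W U : List Phi) (hL : L ∈ W) (hnz : q (w W) ≠ q 0)
    (hequiv : hCon (w U) (w W)) :
    (∃ A : List Phi, Aword A ∧ U = L :: A) ∨
    (∃ A1 A2 A3 : List Phi, Aword A1 ∧ Aword A2 ∧ Aword A3 ∧
      U = [M] ++ A1 ++ [P] ++ A2 ++ [g] ++ A3) ∨
    (L ∉ U ∧ g ∉ U ∧
      U.count M = 1 ∧ U.head? = some M ∧
      U.count P = 1 ∧ U.count R = 1 ∧ U.count Q = 1 ∧
      U.countP isTS = 1 ∧
      ∃ B1 B2 B3 B4 : List Phi,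
        U = B1 ++ [P] ++ B2 ++ [R] ++ B3 ++ [Q] ++ B4) := by
  have hW : ¬ hCon (w W) 0 := fun h => hnz ((Con.eq hCon).mpr h)
  obtain ⟨A, hA, rfl⟩ := eq_L_cons_of_not_hCon_zero hL hW
  have hU : Accepts U := accepts_of_hCon hequiv hW (accepts_L_cons hA)
  rcases hasShape_of_accepts hU with h | h | h
  · exact Or.inl h.eq_L_cons
  · exact Or.inr (Or.inl h.eq_M_P_g)
  · exact Or.inr (Or.inr h.M_P_R_Q)
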